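/- arXiv:1710.00503 — 3 statements merged into one kernel-verified Lean document; each statement's English description precedes it below -/
import Mathlib

section
/- Let Y be a compact metric space and f₁,…,f_m : Y → Y maps with Lipschitz constants λ₁,…,λ_m < 1. Let a₁,…,a_m be positive reals with ∑aᵢ = 1. Then there exists a unique Borel probability measure μ₀ on Y satisfying μ₀ = ∑_{i=1}^m aᵢ (fᵢ)_*(μ₀), i.e., μ₀(A) = ∑ aᵢ μ₀(fᵢ⁻¹(A)) for every Borel set A ⊆ Y. -/
/-!
A Lipschitz function `φ` integrates against `T μ := ∑ aᵢ (fᵢ)_* μ` as the function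
`∑ aᵢ φ ∘ fᵢ` integrates against `μ`, and that function is `c`-times as Lipschitz, where
`c = maxᵢ λᵢ < 1`. Since a `K`-Lipschitz function integrates against any two probability measures
to values at most `K · diam Y` apart, `∫ φ d(Tⁿ μ) - ∫ φ d(Tⁿ ν)` is `O(cⁿ)`. For two fixed points
this forces all Lipschitz integrals, hence the measures, to agree. For existence, the probability
measures on the compact space `Y` are weakly sequentially compact, so `Tⁿ δ_y` has a convergent
subsequence; along it `∫ φ d(T μₙ) - ∫ φ dμₙ → 0`, and this defect is weakly continuous, so the
limit is fixed.
-/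

open MeasureTheory Filter Topology Metric Function
open scoped NNReal

namespace MeasureTheory

variable {Y : Type*} [MeasurableSpace Y]

lemma ext_of_forall_lipschitz_integral_eq [PseudoEMetricSpace Y] [BorelSpace Y]
    {μ ν : Measure Y} [IsProbabilityMeasure μ] [IsProbabilityMeasure ν]
    (h : ∀ φ : Y → ℝ, (∃ C, ∀ x y, dist (φ x) (φ y) ≤ C) → (∃ K, LipschitzWith K φ) →
      ∫ x, φ x ∂μ = ∫ x, φ x ∂ν) :
    μ = ν := by
  let P : ProbabilityMeasure Y := ⟨μ, inferInstance⟩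
  let Q : ProbabilityMeasure Y := ⟨ν, inferInstance⟩
  have hPQ : Tendsto (fun _ : ℕ ↦ P) atTop (𝓝 Q) :=
    tendsto_iff_forall_lipschitz_integral_tendsto.mpr fun φ hφ hφK ↦ by
      simp [P, Q, h φ hφ hφK]
  exact congrArg ProbabilityMeasure.toMeasure (tendsto_const_nhds_iff.mp hPQ : P = Q)

lemma integral_sub_integral_le_of_forall_sub_le {μ ν : Measure Y}
    [IsProbabilityMeasure μ] [IsProbabilityMeasure ν] {φ : Y → ℝ} {C : ℝ}
    (hμ : Integrable φ μ) (hν : Integrable φ ν) (h : ∀ x y, φ x - φ y ≤ C) :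
    ∫ x, φ x ∂μ - ∫ y, φ y ∂ν ≤ C := by
  have hbelow : ∀ y, ∫ x, φ x ∂μ - C ≤ φ y := fun y ↦ by
    have : ∫ x, φ x ∂μ ≤ ∫ _, φ y + C ∂μ :=
      integral_mono hμ (integrable_const _) fun x ↦ by linarith [h x y]
    simp only [integral_const, probReal_univ, smul_eq_mul, one_mul] at this
    linarith
  have : ∫ _, (∫ x, φ x ∂μ - C) ∂ν ≤ ∫ y, φ y ∂ν :=
    integral_mono (integrable_const _) hν hbelow
  simp only [integral_const, probReal_univ, smul_eq_mul, one_mul] at this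
  linarith

variable {ι : Type*} [Fintype ι]

noncomputable def hutchinson (a : ι → ℝ≥0) (f : ι → Y → Y) (μ : Measure Y) : Measure Y :=
  ∑ i, a i • μ.map (f i)

lemma isProbabilityMeasure_hutchinson {a : ι → ℝ≥0} {f : ι → Y → Y} (hsum : ∑ i, a i = 1)
    (hf : ∀ i, Measurable (f i)) (μ : Measure Y) [IsProbabilityMeasure μ] :
    IsProbabilityMeasure (hutchinson a f μ) := by
  constructor
  simp [hutchinson, Measure.map_apply (hf _) MeasurableSet.univ, ← ENNReal.ofNNReal_finsetSum,
    hsum]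

lemma isProbabilityMeasure_iterate_hutchinson {a : ι → ℝ≥0} {f : ι → Y → Y}
    (hsum : ∑ i, a i = 1) (hf : ∀ i, Measurable (f i)) (μ : Measure Y) [IsProbabilityMeasure μ]
    (n : ℕ) : IsProbabilityMeasure ((hutchinson a f)^[n] μ) := by
  induction n with
  | zero => assumption
  | succ n ih =>
    rw [iterate_succ_apply']
    exact isProbabilityMeasure_hutchinson hsum hf _

variable [TopologicalSpace Y] [CompactSpace Y] [BorelSpace Y]

lemma integral_hutchinson {a : ι → ℝ≥0} {f : ι → Y → Y} (hf : ∀ i, Continuous (f i))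
    (μ : Measure Y) [IsFiniteMeasure μ] {φ : Y → ℝ} (hφ : Continuous φ) :
    ∫ x, φ x ∂hutchinson a f μ = ∫ x, ∑ i, (a i : ℝ) * φ (f i x) ∂μ := by
  have hint : ∀ (κ : Measure Y) [IsFiniteMeasure κ] {ψ : Y → ℝ}, Continuous ψ → Integrable ψ κ :=
    fun κ _ ψ hψ ↦ hψ.integrable_of_hasCompactSupport (HasCompactSupport.of_compactSpace ψ)
  rw [hutchinson, integral_finsetSum_measure, integral_finsetSum]
  · refine Finset.sum_congr rfl fun i _ ↦ ?_
    rw [integral_smul_nnreal_measure, integral_map (hf i).aemeasurable hφ.aestronglyMeasurable,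
      integral_const_mul, NNReal.smul_def, smul_eq_mul]
  · exact fun i _ ↦ hint μ (continuous_const.mul (hφ.comp (hf i)))
  · exact fun i _ ↦ (hint _ hφ).smul_measure ENNReal.coe_ne_top

end MeasureTheory

lemma LipschitzWith.sum_mul_comp {Y ι : Type*} [PseudoMetricSpace Y] [Fintype ι]
    {a : ι → ℝ≥0} {f : ι → Y → Y} {c K : ℝ≥0} (hsum : ∑ i, a i = 1)
    (hf : ∀ i, LipschitzWith c (f i)) {φ : Y → ℝ} (hφ : LipschitzWith K φ) :
    LipschitzWith (c * K) fun x ↦ ∑ i, (a i : ℝ) * φ (f i x) := by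
  refine LipschitzWith.of_dist_le_mul fun x y ↦ ?_
  calc dist (∑ i, (a i : ℝ) * φ (f i x)) (∑ i, (a i : ℝ) * φ (f i y))
      ≤ ∑ i, dist ((a i : ℝ) * φ (f i x)) ((a i : ℝ) * φ (f i y)) := dist_sum_sum_le _ _ _
    _ ≤ ∑ i, (a i : ℝ) * (K * (c * dist x y)) := by
      refine Finset.sum_le_sum fun i _ ↦ ?_
      rw [Real.dist_eq, ← mul_sub, abs_mul, NNReal.abs_eq, ← Real.dist_eq]
      gcongr
      exact (hφ.dist_le_mul _ _).trans (by gcongr; exact (hf i).dist_le_mul x y)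
    _ = (c * K : ℝ≥0) * dist x y := by
      rw [← Finset.sum_mul, ← NNReal.coe_sum, hsum]; push_cast; ring

lemma LipschitzWith.abs_integral_sub_integral_le {Y : Type*} [PseudoMetricSpace Y]
    [CompactSpace Y] [MeasurableSpace Y] [BorelSpace Y] {μ ν : Measure Y}
    [IsProbabilityMeasure μ] [IsProbabilityMeasure ν] {φ : Y → ℝ} {K : ℝ≥0}
    (hφ : LipschitzWith K φ) : |∫ x, φ x ∂μ - ∫ x, φ x ∂ν| ≤ K * diam (Set.univ : Set Y) := by
  have hint : ∀ (κ : Measure Y) [IsFiniteMeasure κ], Integrable φ κ := fun κ _ ↦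
    hφ.continuous.integrable_of_hasCompactSupport (HasCompactSupport.of_compactSpace φ)
  have hosc : ∀ x y, φ x - φ y ≤ K * diam (Set.univ : Set Y) := fun x y ↦
    (le_abs_self _).trans <| (hφ.dist_le_mul x y).trans <| by
      gcongr; exact dist_le_diam_of_mem isBounded_of_compactSpace trivial trivial
  exact abs_sub_le_iff.mpr ⟨integral_sub_integral_le_of_forall_sub_le (hint μ) (hint ν) hosc,
    integral_sub_integral_le_of_forall_sub_le (hint ν) (hint μ) hosc⟩

namespace MeasureTheory

variable {Y ι : Type*} [MetricSpace Y] [CompactSpace Y] [MeasurableSpace Y] [BorelSpace Y]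
  [Fintype ι] {a : ι → ℝ≥0} {f : ι → Y → Y} {c : ℝ≥0}

lemma abs_integral_iterate_hutchinson_sub_le (hsum : ∑ i, a i = 1)
    (hf : ∀ i, LipschitzWith c (f i)) (μ ν : Measure Y) [IsProbabilityMeasure μ]
    [IsProbabilityMeasure ν] (n : ℕ) {φ : Y → ℝ} {K : ℝ≥0} (hφ : LipschitzWith K φ) :
    |∫ x, φ x ∂(hutchinson a f)^[n] μ - ∫ x, φ x ∂(hutchinson a f)^[n] ν| ≤
      c ^ n * (K * diam (Set.univ : Set Y)) := by
  induction n generalizing K φ with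
  | zero => simpa using hφ.abs_integral_sub_integral_le
  | succ n ih =>
    have hcont i := (hf i).continuous
    have := isProbabilityMeasure_iterate_hutchinson hsum (fun i ↦ (hcont i).measurable) μ n
    have := isProbabilityMeasure_iterate_hutchinson hsum (fun i ↦ (hcont i).measurable) ν n
    rw [iterate_succ_apply', iterate_succ_apply', integral_hutchinson hcont _ hφ.continuous,
      integral_hutchinson hcont _ hφ.continuous]
    calc _ ≤ c ^ n * ((c * K : ℝ≥0) * diam (Set.univ : Set Y)) := ih (hφ.sum_mul_comp hsum hf)
      _ = c ^ (n + 1) * (K * diam (Set.univ : Set Y)) := by push_cast; ring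

lemma tendsto_integral_iterate_hutchinson_sub (hsum : ∑ i, a i = 1) (hc : c < 1)
    (hf : ∀ i, LipschitzWith c (f i)) (μ ν : Measure Y) [IsProbabilityMeasure μ]
    [IsProbabilityMeasure ν] {φ : Y → ℝ} {K : ℝ≥0} (hφ : LipschitzWith K φ) :
    Tendsto (fun n ↦ ∫ x, φ x ∂(hutchinson a f)^[n] μ - ∫ x, φ x ∂(hutchinson a f)^[n] ν)
      atTop (𝓝 0) := by
  have hlim := (tendsto_pow_atTop_nhds_zero_of_lt_one c.coe_nonneg hc).mul_const
    (K * diam (Set.univ : Set Y))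
  rw [zero_mul] at hlim
  exact squeeze_zero_norm (abs_integral_iterate_hutchinson_sub_le hsum hf μ ν · hφ) hlim

lemma eq_of_isFixedPt_hutchinson (hsum : ∑ i, a i = 1) (hc : c < 1)
    (hf : ∀ i, LipschitzWith c (f i)) {μ ν : Measure Y} [IsProbabilityMeasure μ]
    [IsProbabilityMeasure ν] (hμ : IsFixedPt (hutchinson a f) μ)
    (hν : IsFixedPt (hutchinson a f) ν) : μ = ν := by
  refine ext_of_forall_lipschitz_integral_eq fun φ _ ⟨K, hφ⟩ ↦ sub_eq_zero.mp ?_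
  have hlim := tendsto_integral_iterate_hutchinson_sub hsum hc hf μ ν hφ
  simp only [iterate_fixed hμ, iterate_fixed hν] at hlim
  exact tendsto_const_nhds_iff.mp hlim

lemma exists_isFixedPt_hutchinson [Nonempty Y] (hsum : ∑ i, a i = 1) (hc : c < 1)
    (hf : ∀ i, LipschitzWith c (f i)) :
    ∃ μ : Measure Y, IsProbabilityMeasure μ ∧ IsFixedPt (hutchinson a f) μ := by
  have hcont i := (hf i).continuous
  have hmeas i := (hcont i).measurable
  obtain ⟨y₀⟩ := ‹Nonempty Y›
  let δ := Measure.dirac y₀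
  have := isProbabilityMeasure_hutchinson hsum hmeas δ
  let μs (n : ℕ) : ProbabilityMeasure Y :=
    ⟨(hutchinson a f)^[n] δ, isProbabilityMeasure_iterate_hutchinson hsum hmeas δ n⟩
  obtain ⟨ν, s, hs, hν⟩ := CompactSpace.tendsto_subseq μs
  have := isProbabilityMeasure_hutchinson hsum hmeas (ν : Measure Y)
  refine ⟨ν, inferInstance, ext_of_forall_lipschitz_integral_eq fun φ _ ⟨K, hφ⟩ ↦ ?_⟩
  have hφc := hφ.continuous
  let ψ : C(Y, ℝ) := ⟨fun x ↦ ∑ i, (a i : ℝ) * φ (f i x), by fun_prop⟩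
  let φ' : C(Y, ℝ) := ⟨φ, hφc⟩
  let defect (ρ : ProbabilityMeasure Y) : ℝ := ∫ x, ψ x ∂ρ - ∫ x, φ' x ∂ρ
  have hdefect : Continuous defect :=
    (ProbabilityMeasure.continuous_integral_continuousMap ψ).sub
      (ProbabilityMeasure.continuous_integral_continuousMap φ')
  have hμs : Tendsto (defect ∘ μs) atTop (𝓝 0) := by
    refine (tendsto_integral_iterate_hutchinson_sub hsum hc hf (hutchinson a f δ) δ hφ).congr
      fun n ↦ ?_
    have := isProbabilityMeasure_iterate_hutchinson hsum hmeas δ n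
    rw [← iterate_succ_apply, iterate_succ_apply', integral_hutchinson hcont _ hφc]
    rfl
  have hν0 : defect ν = 0 :=
    tendsto_nhds_unique ((hdefect.tendsto ν).comp hν) (hμs.comp hs.tendsto_atTop)
  rw [integral_hutchinson hcont _ hφc]
  exact sub_eq_zero.mp hν0

end MeasureTheory

open MeasureTheory in
theorem stmt_6_general {Y : Type*} [MetricSpace Y] [CompactSpace Y] [Nonempty Y]
    [MeasurableSpace Y] [BorelSpace Y]
    (m : ℕ) (f : Fin m → Y → Y) (lam : Fin m → NNReal)
    (hlam : ∀ i, lam i < 1) (hf : ∀ i, LipschitzWith (lam i) (f i))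
    (a : Fin m → NNReal) (hsum : ∑ i, a i = 1) :
    ∃! μ : Measure Y, IsProbabilityMeasure μ ∧
      μ = ∑ i, a i • Measure.map (f i) μ := by
  set c := Finset.univ.sup lam
  have hc : c < 1 := (Finset.sup_lt_iff zero_lt_one).mpr fun i _ ↦ hlam i
  have hfc i : LipschitzWith c (f i) := (hf i).weaken (Finset.le_sup (Finset.mem_univ i))
  obtain ⟨μ, hμ, hμfix⟩ := exists_isFixedPt_hutchinson hsum hc hfc
  refine ⟨μ, ⟨hμ, hμfix.symm⟩, fun ν ⟨hν, hνfix⟩ ↦ ?_⟩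
  exact eq_of_isFixedPt_hutchinson hsum hc hfc hνfix.symm hμfix

theorem stmt_6 {Y : Type*} [MetricSpace Y] [CompactSpace Y] [Nonempty Y]
    [MeasurableSpace Y] [BorelSpace Y]
    (m : ℕ) (f : Fin m → Y → Y) (lam : Fin m → NNReal)
    (hlam : ∀ i, lam i < 1) (hf : ∀ i, LipschitzWith (lam i) (f i))
    (a : Fin m → NNReal) (ha : ∀ i, 0 < a i) (hsum : ∑ i, a i = 1) :
    ∃! μ : Measure Y, IsProbabilityMeasure μ ∧
      μ = ∑ i, a i • Measure.map (f i) μ :=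
  stmt_6_general m f lam hlam hf a hsum
end

section
/- Let {V̄_I}_{I∈ℐ*} come from a ({λᵢ}, φ, ν)-asymptotic similarity system with diameter bounds: for some n₀ with o(n₀)<1/2, every word W-restriction satisfies (1/2)λ_I |V̄_W| < |V̄_{WI}| < 2λ_I |V̄_W|. Then there exists D ≥ 1 such that for all words I, J: (i) V̄_{I} ⊆ V̄_{I⁻} where I⁻ drops the last letter; (ii) there exists n with max_{I∈ℐⁿ}|V̄_I| < D⁻¹; (iii) D⁻¹ ≤ |V̄_{IJ}|/(|V̄_I||V̄_J|) ≤ D. That is, {V̄_I} is a controlled Moran construction. -/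
open Set Metric

theorem stmt_15 {X : Type*} [MetricSpace X]
    (k : ℕ) (hk : 0 < k) (lam : Fin k → ℝ) (hlam : ∀ i, lam i ∈ Ioo (0 : ℝ) 1)
    (ν : ℝ) (hν : ν ∈ Ioo (0 : ℝ) 1)
    (Vb : List (Fin k) → Set X)
    (hpos : ∀ I : List (Fin k), 0 < diam (Vb I))
    (hnest : ∀ (I : List (Fin k)) (i : Fin k), Vb (I ++ [i]) ⊆ Vb I)
    (hgeom : ∀ I : List (Fin k), diam (Vb I) ≤ ν ^ I.length * diam (Vb []))
    (n₀ : ℕ)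
    (hcomp : ∀ W : List (Fin k), W.length = n₀ → ∀ I : List (Fin k),
      (1 / 2) * (I.map lam).prod * diam (Vb W) < diam (Vb (W ++ I)) ∧
      diam (Vb (W ++ I)) < 2 * (I.map lam).prod * diam (Vb W)) :
    ∃ D : ℝ, 1 ≤ D ∧
      (∀ (I : List (Fin k)) (i : Fin k), Vb (I ++ [i]) ⊆ Vb I) ∧
      (∃ n : ℕ, ∀ I : List (Fin k), I.length = n → diam (Vb I) < D⁻¹) ∧
      (∀ I J : List (Fin k), I ≠ [] → J ≠ [] →
        D⁻¹ ≤ diam (Vb (I ++ J)) / (diam (Vb I) * diam (Vb J)) ∧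
        diam (Vb (I ++ J)) / (diam (Vb I) * diam (Vb J)) ≤ D) := by
  obtain ⟨hν0, hν1⟩ := hν
  set M := diam (Vb []) with hMdef
  have hM0 : 0 < M := hpos []
  -- minimal contraction ratio
  have hkne : (Finset.univ : Finset (Fin k)).Nonempty := ⟨⟨0, hk⟩, Finset.mem_univ _⟩
  set lam0 := Finset.univ.inf' hkne lam with hlam0def
  have hlam0pos : 0 < lam0 := (Finset.lt_inf'_iff hkne).2 (fun i _ => (hlam i).1)
  have hlam0le : ∀ i, lam0 ≤ lam i := fun i => Finset.inf'_le _ (Finset.mem_univ i)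
  have hlam0lt1 : lam0 < 1 := lt_of_le_of_lt (hlam0le ⟨0, hk⟩) (hlam ⟨0, hk⟩).2
  -- product facts
  have hprod_pos : ∀ J : List (Fin k), 0 < (J.map lam).prod := by
    intro J
    induction J with
    | nil => simp
    | cons a t ih =>
        rw [List.map_cons, List.prod_cons]
        exact mul_pos (hlam a).1 ih
  have hprod_le_one : ∀ J : List (Fin k), (J.map lam).prod ≤ 1 := by
    intro J
    induction J with
    | nil => simp
    | cons a t ih =>
        rw [List.map_cons, List.prod_cons]
        nlinarith [(hlam a).1, (hlam a).2, hprod_pos t]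
  have hpow_le : ∀ J : List (Fin k), lam0 ^ J.length ≤ (J.map lam).prod := by
    intro J
    induction J with
    | nil => simp
    | cons a t ih =>
        rw [List.map_cons, List.prod_cons, List.length_cons, pow_succ, mul_comm (lam0 ^ t.length) lam0]
        exact mul_le_mul (hlam0le a) ih (pow_nonneg hlam0pos.le _) (hlam a).1.le
  -- all diameters are at most M
  have hdiam_le_M : ∀ I : List (Fin k), diam (Vb I) ≤ M := by
    intro I
    have h1 : ν ^ I.length ≤ 1 := pow_le_one₀ hν0.le hν1.le
    have := hgeom I
    nlinarith
  -- the finite set of short words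
  classical
  set S : Finset (List (Fin k)) :=
    (Finset.range (n₀ + 1)).biUnion
      (fun n => Finset.image (fun f : Fin n → Fin k => List.ofFn f) Finset.univ) with hSdef
  have hmemS : ∀ J : List (Fin k), J.length ≤ n₀ → J ∈ S := by
    intro J hJ
    rw [hSdef, Finset.mem_biUnion]
    refine ⟨J.length, Finset.mem_range.2 (Nat.lt_succ_of_le hJ), ?_⟩
    rw [Finset.mem_image]
    exact ⟨J.get, Finset.mem_univ _, List.ofFn_get J⟩
  have hSne : S.Nonempty := ⟨[], hmemS [] (Nat.zero_le _)⟩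
  set m₀ := S.inf' hSne (fun W => diam (Vb W)) with hm₀def
  have hm₀pos : 0 < m₀ := (Finset.lt_inf'_iff hSne).2 (fun W _ => hpos W)
  have hm₀le : ∀ J : List (Fin k), J.length ≤ n₀ → m₀ ≤ diam (Vb J) :=
    fun J hJ => Finset.inf'_le _ (hmemS J hJ)
  set p := lam0 ^ n₀ with hpdef
  have hp0 : 0 < p := pow_pos hlam0pos n₀
  have hp1 : p ≤ 1 := pow_le_one₀ hlam0pos.le hlam0lt1.le
  set cl := m₀ / 2 with hcldef
  set Cu := 2 * M / p with hCudef
  have hcl0 : 0 < cl := by positivity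
  have hCu0 : 0 < Cu := by positivity
  -- the key two-sided comparison with λ_J
  have key : ∀ J : List (Fin k),
      cl * (J.map lam).prod ≤ diam (Vb J) ∧ diam (Vb J) ≤ Cu * (J.map lam).prod := by
    intro J
    by_cases hlen : J.length ≤ n₀
    · have hmle := hm₀le J hlen
      have hple : p ≤ (J.map lam).prod := by
        calc p = lam0 ^ n₀ := rfl
        _ ≤ lam0 ^ J.length := pow_le_pow_of_le_one hlam0pos.le hlam0lt1.le hlen
        _ ≤ (J.map lam).prod := hpow_le J
      constructor
      · have h1 : (J.map lam).prod ≤ 1 := hprod_le_one J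
        nlinarith
      · have hdM := hdiam_le_M J
        have : Cu * p = 2 * M := by
          rw [hCudef]; field_simp
        nlinarith [hprod_pos J]
    · push_neg at hlen
      have hlen' : n₀ ≤ J.length := hlen.le
      set W := J.take n₀ with hWdef
      set J' := J.drop n₀ with hJ'def
      have hJsplit : J = W ++ J' := (List.take_append_drop _ _).symm
      have hWlen : W.length = n₀ := by
        rw [hWdef, List.length_take]; exact min_eq_left hlen'
      obtain ⟨h1, h2⟩ := hcomp W hWlen J'
      have hprodsplit : (J.map lam).prod = (W.map lam).prod * (J'.map lam).prod := by
        rw [hJsplit, List.map_append, List.prod_append]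
      have hWm : m₀ ≤ diam (Vb W) := hm₀le W (le_of_eq hWlen)
      have hWM : diam (Vb W) ≤ M := hdiam_le_M W
      have hWp : p ≤ (W.map lam).prod := by
        have := hpow_le W; rwa [hWlen] at this
      have hW1 : (W.map lam).prod ≤ 1 := hprod_le_one W
      have hJ'pos : 0 < (J'.map lam).prod := hprod_pos J'
      have hCup : Cu * p = 2 * M := by rw [hCudef]; field_simp
      rw [hJsplit, List.map_append, List.prod_append]
      constructor
      · calc cl * ((W.map lam).prod * (J'.map lam).prod)
              ≤ cl * (J'.map lam).prod := by
                apply mul_le_mul_of_nonneg_left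
                  (mul_le_of_le_one_left hJ'pos.le hW1) hcl0.le
          _ = 1 / 2 * (J'.map lam).prod * m₀ := by rw [hcldef]; ring
          _ ≤ 1 / 2 * (J'.map lam).prod * diam (Vb W) := by
                apply mul_le_mul_of_nonneg_left hWm (by positivity)
          _ ≤ diam (Vb (W ++ J')) := h1.le
      · calc diam (Vb (W ++ J')) ≤ 2 * (J'.map lam).prod * diam (Vb W) := h2.le
          _ ≤ 2 * (J'.map lam).prod * M := by
                apply mul_le_mul_of_nonneg_left hWM (by positivity)
          _ = Cu * (p * (J'.map lam).prod) := by linear_combination (J'.map lam).prod * hCup.symm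
          _ ≤ Cu * ((W.map lam).prod * (J'.map lam).prod) := by
                apply mul_le_mul_of_nonneg_left
                  (mul_le_mul_of_nonneg_right hWp hJ'pos.le) hCu0.le
  -- choose D
  set D := max (Cu / cl ^ 2) (max (Cu ^ 2 / cl) 1) with hDdef
  have hD1 : 1 ≤ D := le_max_of_le_right (le_max_right _ _)
  have hDa : Cu / cl ^ 2 ≤ D := le_max_left _ _
  have hDb : Cu ^ 2 / cl ≤ D := le_max_of_le_right (le_max_left _ _)
  have hD0 : 0 < D := lt_of_lt_of_le one_pos hD1
  refine ⟨D, hD1, hnest, ?_, ?_⟩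
  · -- small diameters at some level
    have hDinv : 0 < D⁻¹ := inv_pos.2 hD0
    obtain ⟨n, hn⟩ := exists_pow_lt_of_lt_one (div_pos hDinv hM0) hν1
    refine ⟨n, fun I hI => ?_⟩
    have := hgeom I
    rw [hI] at this
    calc diam (Vb I) ≤ ν ^ n * M := this
    _ < D⁻¹ / M * M := by
        exact mul_lt_mul_of_pos_right hn hM0
    _ = D⁻¹ := div_mul_cancel₀ _ hM0.ne'
  · intro I J _ _
    obtain ⟨hI1, hI2⟩ := key I
    obtain ⟨hJ1, hJ2⟩ := key J
    obtain ⟨hIJ1, hIJ2⟩ := key (I ++ J)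
    rw [List.map_append, List.prod_append] at hIJ1 hIJ2
    set lI := (I.map lam).prod with hlIdef
    set lJ := (J.map lam).prod with hlJdef
    have hlI0 : 0 < lI := hprod_pos I
    have hlJ0 : 0 < lJ := hprod_pos J
    have ha0 : 0 < diam (Vb I) := hpos I
    have hb0 : 0 < diam (Vb J) := hpos J
    have hab0 : 0 < diam (Vb I) * diam (Vb J) := mul_pos ha0 hb0
    have hlow : cl ^ 2 * (lI * lJ) ≤ diam (Vb I) * diam (Vb J) := by
      have h := mul_le_mul hI1 hJ1 (by positivity) ha0.le
      calc cl ^ 2 * (lI * lJ) = cl * lI * (cl * lJ) := by ring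
        _ ≤ _ := h
    have hhigh : diam (Vb I) * diam (Vb J) ≤ Cu ^ 2 * (lI * lJ) := by
      have h := mul_le_mul hI2 hJ2 hb0.le (by positivity : (0:ℝ) ≤ Cu * lI)
      calc diam (Vb I) * diam (Vb J) ≤ Cu * lI * (Cu * lJ) := h
        _ = Cu ^ 2 * (lI * lJ) := by ring
    constructor
    · -- lower bound
      have hDinv : D⁻¹ ≤ cl / Cu ^ 2 := by
        have h1 : 0 < Cu ^ 2 / cl := by positivity
        have h2 : D⁻¹ ≤ (Cu ^ 2 / cl)⁻¹ := inv_anti₀ h1 hDb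
        rwa [inv_div] at h2
      rw [le_div_iff₀ hab0]
      calc D⁻¹ * (diam (Vb I) * diam (Vb J)) ≤ (cl / Cu ^ 2) * (Cu ^ 2 * (lI * lJ)) := by
            apply mul_le_mul hDinv hhigh hab0.le (by positivity)
      _ = cl * (lI * lJ) := by field_simp
      _ ≤ diam (Vb (I ++ J)) := hIJ1
    · -- upper bound
      rw [div_le_iff₀ hab0]
      calc diam (Vb (I ++ J)) ≤ Cu * (lI * lJ) := hIJ2
      _ = (Cu / cl ^ 2) * (cl ^ 2 * (lI * lJ)) := by field_simp
      _ ≤ D * (diam (Vb I) * diam (Vb J)) := by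
            apply mul_le_mul hDa hlow (by positivity) hD0.le
end

section
/- Let a, b, c be the side lengths of a triangle with 0 < a,b,c ≤ r ≤ 1, admitting comparison triangles in the unit sphere S², the hyperbolic plane H², and the Euclidean plane ℝ², and suppose the Euclidean comparison triangle is δ-non-degenerate. Let α₊, α₋, α₀ be the angles at the vertex opposite side a in the spherical, hyperbolic, and Euclidean comparison triangles, determined by cos α₊ = (cos a − cos b cos c)/(sin b sin c), cos α₋ = (cosh b cosh c − cosh a)/(sinh b sinh c), cos α₀ = (b²+c²−a²)/(2bc). Then |α₊ − α₋| ≤ C(δ) r² for a constant C(δ) depending only on δ. -/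
/-!
Write the spherical and hyperbolic laws of cosines uniformly as
`cos α = (C a - C b * C c) / (κ * S b * S c)` with `κ = ±1` and `(C, S) = (cos, sin)`
or `(cosh, sinh)`. Fourth-order Taylor expansions of `C` and `S` show that numerator and
denominator agree with those of the Euclidean law of cosines up to relative errors
`O(r² / sin² δ)`: the non-degeneracy makes all sides comparable (law of sines), so
`a⁴ sin² δ ≤ b c r²`. Both cosines are thus `O(r²)`-close to `cos α₀ ∈ [-cos δ, cos δ]`, where
`arccos` is Lipschitz; when `r` is not small the trivial bound `π` suffices.
-/

open Real

theorem Real.abs_cosh_sub_le {x : ℝ} (hx : |x| ≤ 1) :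
    |cosh x - (1 + x ^ 2 / 2)| ≤ |x| ^ 4 * (5 / 96) := by
  have h := Complex.cos_bound (x := x * Complex.I) (by simpa using hx)
  have e : Complex.cos (x * Complex.I) - (1 - (x * Complex.I) ^ 2 / 2)
      = ((cosh x - (1 + x ^ 2 / 2) : ℝ) : ℂ) := by
    rw [Complex.cos_mul_I]; push_cast; linear_combination (x ^ 2 / 2 : ℂ) * Complex.I_sq
  rwa [e, Complex.norm_real, norm_mul, Complex.norm_I, mul_one, Complex.norm_real] at h

theorem Real.abs_sinh_sub_le {x : ℝ} (hx : |x| ≤ 1) :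
    |sinh x - (x + x ^ 3 / 6)| ≤ |x| ^ 5 / 100 := by
  have h := Complex.sin_bound (x := x * Complex.I) (by simpa using hx)
  have e : Complex.sin (x * Complex.I) - (x * Complex.I - (x * Complex.I) ^ 3 / 6)
      = ((sinh x - (x + x ^ 3 / 6) : ℝ) : ℂ) * Complex.I := by
    rw [Complex.sin_mul_I]; push_cast
    linear_combination (x ^ 3 * Complex.I / 6 : ℂ) * Complex.I_sq
  rwa [e, norm_mul, Complex.norm_I, mul_one, Complex.norm_real, norm_mul, Complex.norm_I,
    mul_one, Complex.norm_real] at h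

lemma pow_four_mul_sq_le {x y z r s : ℝ} (hx : 0 ≤ x) (hs : 0 ≤ s) (hy : x * s ≤ y)
    (hz : x * s ≤ z) (hxr : x ≤ r) : x ^ 4 * s ^ 2 ≤ y * z * r ^ 2 := by
  calc x ^ 4 * s ^ 2 = (x * s) * (x * s) * x ^ 2 := by ring
    _ ≤ y * z * r ^ 2 := by
      have hxs : 0 ≤ x * s := mul_nonneg hx hs
      exact mul_le_mul (mul_le_mul hy hz hxs (hxs.trans hy)) (pow_le_pow_left₀ hx hxr 2)
        (sq_nonneg x) (mul_nonneg (hxs.trans hy) (hxs.trans hz))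

lemma abs_div_sub_div_le {N Q D B ε η : ℝ} (hB : 0 < B) (hQ : B / 2 ≤ Q)
    (hN : |N - D| ≤ ε * B) (hQB : |Q - B| ≤ η * B) (hD : |D| ≤ B) :
    |N / Q - D / B| ≤ 2 * (ε + η) := by
  have hQ0 : 0 < Q := by linarith
  have hDB : |D / B| ≤ 1 := by rwa [abs_div, abs_of_pos hB, div_le_one hB]
  have e : N / Q - D / B = ((N - D) - D / B * (Q - B)) / Q := by field_simp; ring
  rw [e, abs_div, abs_of_pos hQ0, div_le_iff₀ hQ0]
  calc |(N - D) - D / B * (Q - B)| ≤ |N - D| + |D / B| * |Q - B| := by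
        rw [← abs_mul]; exact abs_sub _ _
    _ ≤ ε * B + 1 * (η * B) := by gcongr
    _ ≤ 2 * (ε + η) * Q := by nlinarith [abs_nonneg (N - D), abs_nonneg (Q - B)]

section ModelSpace

variable {κ : ℝ} {C S : ℝ → ℝ}

lemma abs_cosineLaw_numerator_sub_le (hκ : |κ| = 1)
    (hC : ∀ x, |x| ≤ 1 → |C x - (1 - κ * x ^ 2 / 2)| ≤ |x| ^ 4 * (5 / 96))
    {a b c : ℝ} (ha : |a| ≤ 1) (hb : |b| ≤ 1) (hc : |c| ≤ 1) :
    |(C a - C b * C c) / κ - (b ^ 2 + c ^ 2 - a ^ 2) / 2|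
      ≤ (b * c) ^ 2 / 4 + (a ^ 4 + b ^ 4 + c ^ 4) / 8 := by
  have hκ2 : κ ^ 2 = 1 := by rw [← sq_abs, hκ, one_pow]
  have hC' : ∀ x, |x| ≤ 1 → |C x - (1 - κ * x ^ 2 / 2)| ≤ x ^ 4 / 16 := fun x hx => by
    have := hC x hx
    rw [Even.pow_abs (by decide)] at this
    nlinarith [pow_nonneg (sq_nonneg x) 2]
  have hfac : ∀ x, |x| ≤ 1 → |1 - κ * x ^ 2 / 2| ≤ 3 / 2 := fun x hx => by
    have := abs_le.1 hκ.le; have : x ^ 2 ≤ 1 := by nlinarith [sq_abs x, abs_nonneg x]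
    rw [abs_le]; constructor <;> nlinarith [sq_nonneg x]
  have h0 := abs_le.1 (hC' a ha)
  set ea := C a - (1 - κ * a ^ 2 / 2)
  set eb := C b - (1 - κ * b ^ 2 / 2)
  set ec := C c - (1 - κ * c ^ 2 / 2)
  have e : (C a - C b * C c) / κ - (b ^ 2 + c ^ 2 - a ^ 2) / 2 = κ * (ea
      - eb * (1 - κ * c ^ 2 / 2) - ec * (1 - κ * b ^ 2 / 2) - eb * ec - (b * c) ^ 2 / 4) := by
    have hinv : κ⁻¹ = κ := inv_eq_of_mul_eq_one_right (by rw [← sq, hκ2])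
    rw [div_eq_mul_inv, hinv]
    linear_combination ((b ^ 2 + c ^ 2 - a ^ 2) / 2 - κ * (b * c) ^ 2 / 4) * hκ2
  have h1 : |eb * (1 - κ * c ^ 2 / 2)| ≤ b ^ 4 / 16 * (3 / 2) := by
    rw [abs_mul]; exact mul_le_mul (hC' b hb) (hfac c hc) (abs_nonneg _) (by positivity)
  have h2 : |ec * (1 - κ * b ^ 2 / 2)| ≤ c ^ 4 / 16 * (3 / 2) := by
    rw [abs_mul]; exact mul_le_mul (hC' c hc) (hfac b hb) (abs_nonneg _) (by positivity)
  have h3 : |eb * ec| ≤ b ^ 4 / 16 * (1 / 16) := by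
    have : c ^ 4 / 16 ≤ 1 / 16 := by
      nlinarith [pow_le_one₀ (abs_nonneg c) hc (n := 4),
        Even.pow_abs (a := c) (n := 4) (by decide)]
    rw [abs_mul]
    exact mul_le_mul (hC' b hb) ((hC' c hc).trans this) (abs_nonneg _) (by positivity)
  rw [e, abs_mul, hκ, one_mul, abs_le]
  have := abs_le.1 h1; have := abs_le.1 h2; have := abs_le.1 h3
  constructor <;> nlinarith [sq_nonneg (b * c), pow_nonneg (sq_nonneg a) 2]

lemma abs_cosineLaw_denominator_sub_le (hκ : |κ| = 1)
    (hS : ∀ x, |x| ≤ 1 → |S x - (x - κ * x ^ 3 / 6)| ≤ |x| ^ 5 / 100)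
    {b c r : ℝ} (hb : 0 ≤ b) (hc : 0 ≤ c) (hbr : b ≤ r) (hcr : c ≤ r) (hr : r ≤ 1) :
    |S b * S c - b * c| ≤ r ^ 2 / 2 * (b * c) := by
  have hS' : ∀ x, 0 ≤ x → x ≤ 1 → |S x - x| ≤ x ^ 3 / 5 := fun x hx hx1 => by
    have h := hS x (by rwa [abs_of_nonneg hx])
    rw [abs_of_nonneg hx] at h
    have hκx : |κ * x ^ 3 / 6| = x ^ 3 / 6 := by
      rw [abs_div, abs_mul, hκ, one_mul, abs_of_nonneg (by positivity)]; norm_num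
    calc |S x - x| ≤ |S x - (x - κ * x ^ 3 / 6)| + |(x - κ * x ^ 3 / 6) - x| :=
          abs_sub_le _ _ _
      _ = |S x - (x - κ * x ^ 3 / 6)| + x ^ 3 / 6 := by
          rw [sub_sub_cancel_left, abs_neg, hκx]
      _ ≤ x ^ 3 / 5 := by
          nlinarith [pow_le_pow_of_le_one hx hx1 (show 3 ≤ 5 by norm_num), pow_nonneg hx 3]
  have hSb := hS' b hb (hbr.trans hr)
  have hSc := hS' c hc (hcr.trans hr)
  have hc3 : c ^ 3 ≤ c := by nlinarith [mul_le_mul hcr hcr hc (hc.trans hcr)]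
  have hScabs : |S c| ≤ 6 / 5 * c := by
    have := abs_sub_abs_le_abs_sub (S c) c
    rw [abs_of_nonneg hc] at this; linarith
  have hb2 : b ^ 2 ≤ r ^ 2 := pow_le_pow_left₀ hb hbr 2
  have hc2 : c ^ 2 ≤ r ^ 2 := pow_le_pow_left₀ hc hcr 2
  calc |S b * S c - b * c| = |(S b - b) * S c + b * (S c - c)| := by ring_nf
    _ ≤ |(S b - b) * S c| + |b * (S c - c)| := abs_add_le _ _
    _ = |S b - b| * |S c| + b * |S c - c| := by rw [abs_mul, abs_mul, abs_of_nonneg hb]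
    _ ≤ b ^ 3 / 5 * (6 / 5 * c) + b * (c ^ 3 / 5) := by gcongr
    _ ≤ r ^ 2 / 2 * (b * c) := by
        nlinarith [mul_le_mul_of_nonneg_left hb2 (mul_nonneg hb hc),
          mul_le_mul_of_nonneg_left hc2 (mul_nonneg hb hc),
          mul_nonneg (mul_nonneg hb hc) (sq_nonneg r)]

theorem abs_cosineLaw_sub_euclidean_le (hκ : |κ| = 1)
    (hC : ∀ x, |x| ≤ 1 → |C x - (1 - κ * x ^ 2 / 2)| ≤ |x| ^ 4 * (5 / 96))
    (hS : ∀ x, |x| ≤ 1 → |S x - (x - κ * x ^ 3 / 6)| ≤ |x| ^ 5 / 100)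
    {a b c r s : ℝ} (ha : 0 < a) (hb : 0 < b) (hc : 0 < c)
    (har : a ≤ r) (hbr : b ≤ r) (hcr : c ≤ r) (hr : r ≤ 1) (hs : 0 < s) (hs1 : s ≤ 1)
    (hab : a * s ≤ b) (hac : a * s ≤ c) (hcb : c * s ≤ b) (hbc : b * s ≤ c)
    (hcos : |(b ^ 2 + c ^ 2 - a ^ 2) / (2 * b * c)| ≤ 1) :
    |(C a - C b * C c) / (κ * (S b * S c)) - (b ^ 2 + c ^ 2 - a ^ 2) / (2 * b * c)|
      ≤ 4 * (r / s) ^ 2 := by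
  have hB : 0 < b * c := mul_pos hb hc
  have habs : ∀ x, 0 < x → x ≤ r → |x| ≤ 1 := fun x hx hxr => by
    rw [abs_of_pos hx]; exact hxr.trans hr
  have hr2 : r ^ 2 ≤ (r / s) ^ 2 := by
    rw [div_pow, le_div_iff₀ (by positivity)]
    nlinarith [pow_le_one₀ hs.le hs1 (n := 2), sq_nonneg r]
  have hbcr : b * c ≤ r ^ 2 := by nlinarith [mul_le_mul hbr hcr hc.le (hb.le.trans hbr)]
  have hnum :
      |(C a - C b * C c) / κ - (b ^ 2 + c ^ 2 - a ^ 2) / 2| ≤ (r / s) ^ 2 * (b * c) := by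
    refine (abs_cosineLaw_numerator_sub_le hκ hC (habs a ha har) (habs b hb hbr)
      (habs c hc hcr)).trans ?_
    have h₁ := pow_four_mul_sq_le ha.le hs.le hab hac har
    have h₂ := pow_four_mul_sq_le hb.le hs.le (mul_le_of_le_one_right hb.le hs1) hbc hbr
    have h₃ := pow_four_mul_sq_le hc.le hs.le hcb (mul_le_of_le_one_right hc.le hs1) hcr
    rw [div_pow, div_mul_eq_mul_div, le_div_iff₀ (by positivity)]
    nlinarith [mul_le_mul_of_nonneg_left hbcr hB.le, pow_le_one₀ hs.le hs1 (n := 2),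
      mul_nonneg (mul_nonneg hB.le hB.le) (sq_nonneg s)]
  have hden := abs_cosineLaw_denominator_sub_le hκ hS hb.le hc.le hbr hcr hr
  have hQ : b * c / 2 ≤ S b * S c := by
    have := (abs_le.1 hden).1
    nlinarith [mul_le_mul_of_nonneg_right (pow_le_one₀ (ha.le.trans har) hr (n := 2)) hB.le]
  have hD : |(b ^ 2 + c ^ 2 - a ^ 2) / 2| ≤ b * c := by
    have e : (b ^ 2 + c ^ 2 - a ^ 2) / 2 = (b ^ 2 + c ^ 2 - a ^ 2) / (2 * b * c) * (b * c) := by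
      field_simp
    rw [e, abs_mul, abs_of_pos hB]
    exact mul_le_of_le_one_left hB.le hcos
  have hden' : |S b * S c - b * c| ≤ (r / s) ^ 2 * (b * c) :=
    hden.trans (mul_le_mul_of_nonneg_right (by linarith [sq_nonneg r]) hB.le)
  rw [div_mul_eq_div_div _ κ, show (b ^ 2 + c ^ 2 - a ^ 2) / (2 * b * c)
    = (b ^ 2 + c ^ 2 - a ^ 2) / 2 / (b * c) by rw [div_div, mul_assoc]]
  linarith [abs_div_sub_div_le hB hQ hnum hden' hD]

end ModelSpace

lemma abs_lt_cos_of_lt_arccos {x δ : ℝ} (hδ : 0 ≤ δ) (h₁ : δ < arccos x)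
    (h₂ : arccos x < π - δ) : |x| < cos δ := by
  have hδπ : δ ≤ π := h₁.le.trans (arccos_le_pi x)
  rw [abs_lt]
  constructor
  · by_contra! h
    have := arccos_le_arccos h
    rw [← cos_pi_sub, arccos_cos (by linarith) (by linarith)] at this
    linarith
  · by_contra! h
    have := arccos_le_arccos h
    rw [arccos_cos hδ hδπ] at this
    linarith

lemma mul_sin_lt_of_div_lt_cos {x y z θ : ℝ} (hx : 0 < x) (hy : 0 < y) (hz : 0 < z)
    (h : (x ^ 2 + z ^ 2 - y ^ 2) / (2 * x * z) < cos θ) : x * sin θ < y ∧ z * sin θ < y := by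
  rw [div_lt_iff₀ (by positivity)] at h
  have hθ := sin_sq_add_cos_sq θ
  constructor <;> refine lt_of_pow_lt_pow_left₀ 2 hy.le ?_
  · nlinarith [sq_nonneg (z - x * cos θ)]
  · nlinarith [sq_nonneg (x - z * cos θ)]

lemma abs_arccos_sub_arccos_le {m x y : ℝ} (hm : m < 1) (hx : |x| ≤ m) (hy : |y| ≤ m) :
    |arccos x - arccos y| ≤ |x - y| / √(1 - m ^ 2) := by
  have hm0 : 0 ≤ m := (abs_nonneg x).trans hx
  have hsqrt : 0 < √(1 - m ^ 2) := sqrt_pos.2 (by nlinarith)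
  have hderiv : ∀ z ∈ Set.Icc (-m) m,
      HasDerivWithinAt arccos (-(1 / √(1 - z ^ 2))) (Set.Icc (-m) m) z := fun z hz =>
    (hasDerivAt_arccos (by linarith [hz.1]) (by linarith [hz.2])).hasDerivWithinAt
  have hbound : ∀ z ∈ Set.Icc (-m) m, ‖-(1 / √(1 - z ^ 2))‖ ≤ 1 / √(1 - m ^ 2) := by
    intro z hz
    have : z ^ 2 ≤ m ^ 2 := by nlinarith [hz.1, hz.2]
    rw [norm_neg, Real.norm_of_nonneg (by positivity)]
    exact one_div_le_one_div_of_le hsqrt (sqrt_le_sqrt (by linarith))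
  have := Convex.norm_image_sub_le_of_norm_hasDerivWithin_le hderiv hbound (convex_Icc _ _)
    (abs_le.1 hy) (abs_le.1 hx)
  rwa [Real.norm_eq_abs, Real.norm_eq_abs, one_div_mul_eq_div] at this

lemma abs_arccos_sub_arccos_le_of_abs_sub_le {x y x₀ t ε : ℝ} (ht : |x₀| ≤ t) (ht1 : t < 1)
    (hx : |x - x₀| ≤ ε) (hy : |y - x₀| ≤ ε) : |arccos x - arccos y| ≤ 2 * π * ε / (1 - t) := by
  have ht1' : 0 < 1 - t := by linarith
  rcases le_or_gt ε ((1 - t) / 2) with hε | hε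
  · obtain ⟨m, hm_def⟩ : ∃ m, m = (1 + t) / 2 := ⟨_, rfl⟩
    have hm : ∀ w, |w - x₀| ≤ ε → |w| ≤ m := fun w hw => by
      linarith [abs_sub_abs_le_abs_sub w x₀]
    have hm0 : 0 ≤ m := by linarith [abs_nonneg x₀]
    have hsqrt : (1 - t) / 2 ≤ √(1 - m ^ 2) := by
      rw [le_sqrt (by linarith) (by nlinarith)]; nlinarith
    calc |arccos x - arccos y| ≤ |x - y| / √(1 - m ^ 2) :=
          abs_arccos_sub_arccos_le (by linarith) (hm x hx) (hm y hy)
      _ ≤ (2 * ε) / ((1 - t) / 2) := by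
          gcongr
          · linarith [abs_nonneg (x - x₀)]
          · linarith [abs_sub_le x x₀ y, abs_sub_comm y x₀]
      _ ≤ 2 * π * ε / (1 - t) := by
          rw [div_div_eq_mul_div]
          apply div_le_div_of_nonneg_right _ ht1'.le
          nlinarith [pi_gt_three, abs_nonneg (x - x₀)]
  · have : |arccos x - arccos y| ≤ π := by
      rw [abs_sub_le_iff]
      constructor <;> linarith [arccos_nonneg x, arccos_le_pi x, arccos_nonneg y, arccos_le_pi y]
    refine this.trans ?_
    rw [le_div_iff₀ ht1']
    nlinarith [pi_pos]

theorem stmt_18 (δ : ℝ) (hδ : 0 < δ) :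
    ∃ C > (0 : ℝ), ∀ a b c r : ℝ,
      0 < a → 0 < b → 0 < c →
      a ≤ r → b ≤ r → c ≤ r → r ≤ 1 →
      a < b + c → b < a + c → c < a + b →
      -- the Euclidean comparison triangle is δ-non-degenerate:
      (δ < arccos ((b ^ 2 + c ^ 2 - a ^ 2) / (2 * b * c)) ∧
        arccos ((b ^ 2 + c ^ 2 - a ^ 2) / (2 * b * c)) < π - δ) →
      (δ < arccos ((a ^ 2 + c ^ 2 - b ^ 2) / (2 * a * c)) ∧
        arccos ((a ^ 2 + c ^ 2 - b ^ 2) / (2 * a * c)) < π - δ) →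
      (δ < arccos ((a ^ 2 + b ^ 2 - c ^ 2) / (2 * a * b)) ∧
        arccos ((a ^ 2 + b ^ 2 - c ^ 2) / (2 * a * b)) < π - δ) →
      |arccos ((Real.cos a - Real.cos b * Real.cos c) / (Real.sin b * Real.sin c)) -
        arccos ((Real.cosh b * Real.cosh c - Real.cosh a) / (Real.sinh b * Real.sinh c))|
        ≤ C * r ^ 2 := by
  rcases le_or_gt (π / 2) δ with hδπ | hδπ
  · exact ⟨1, one_pos, fun a b c r _ _ _ _ _ _ _ _ _ _ hA _ _ => by linarith [hA.1.trans hA.2]⟩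
  have hsin : 0 < sin δ := sin_pos_of_pos_of_lt_pi hδ (by linarith [pi_pos])
  have hcos : cos δ < 1 := by
    simpa using cos_lt_cos_of_nonneg_of_le_pi le_rfl (by linarith [pi_pos]) hδ
  refine ⟨8 * π / (sin δ ^ 2 * (1 - cos δ)), div_pos (by positivity)
    (mul_pos (by positivity) (by linarith)), ?_⟩
  intro a b c r ha hb hc har hbr hcr hr _ _ _ hA hB hC
  have hx₀ := abs_lt_cos_of_lt_arccos hδ.le hA.1 hA.2
  obtain ⟨hab, hcb⟩ := mul_sin_lt_of_div_lt_cos ha hb hc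
    (abs_lt.1 (abs_lt_cos_of_lt_arccos hδ.le hB.1 hB.2)).2
  obtain ⟨hac, hbc⟩ := mul_sin_lt_of_div_lt_cos ha hc hb
    (abs_lt.1 (abs_lt_cos_of_lt_arccos hδ.le hC.1 hC.2)).2
  have hx₀1 : |(b ^ 2 + c ^ 2 - a ^ 2) / (2 * b * c)| ≤ 1 := hx₀.le.trans (cos_le_one δ)
  have hsph := abs_cosineLaw_sub_euclidean_le (κ := 1) abs_one
    (fun x hx => by simpa using cos_bound hx) (fun x hx => by simpa using sin_bound hx)
    ha hb hc har hbr hcr hr hsin (sin_le_one δ) hab.le hac.le hcb.le hbc.le hx₀1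
  have hhyp := abs_cosineLaw_sub_euclidean_le (κ := -1) (by norm_num)
    (fun x hx => by convert abs_cosh_sub_le hx using 3; ring)
    (fun x hx => by convert abs_sinh_sub_le hx using 3; ring)
    ha hb hc har hbr hcr hr hsin (sin_le_one δ) hab.le hac.le hcb.le hbc.le hx₀1
  rw [one_mul] at hsph
  rw [neg_one_mul, div_neg, ← neg_div, neg_sub] at hhyp
  calc _ ≤ 2 * π * (4 * (r / sin δ) ^ 2) / (1 - cos δ) :=
        abs_arccos_sub_arccos_le_of_abs_sub_le hx₀.le hcos hsph hhyp
    _ = 8 * π / (sin δ ^ 2 * (1 - cos δ)) * r ^ 2 := by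
        have : 1 - cos δ ≠ 0 := by linarith
        field_simp
        ring
end
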